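/- Consider the R-local streaming belief propagation algorithm (log-likelihood-ratio form, k = 2) run under StSSBM(n,2,a,b,α), and write M_{v→v'}^t for the value of the message M_{v→v'} before vertex v(t+1) arrives. If the ball B_R^n(u) is a tree, then there exist random time indices { t(v) ∈ [n] : v ∈ D_R^n(u) } such that the final output at u satisfies M_u = Bprop(u; B_R^n(u), {M_v^input = M_{v→pa(v)}^{t(v)} : v ∈ L_{B_R^n(u)}}, τ̃, α, a, b). -/

import Mathlib

open MeasureTheory Finset

noncomputable section
open scoped Classical

/-- Unordered pairs of distinct vertices, represented by ordered pairs with increasing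
coordinates: the potential edges of a graph on `Fin n`. -/
abbrev EdgeIdx (n : ℕ) := {p : Fin n × Fin n // p.1 < p.2}

variable {n : ℕ}

/-- The time (in `{1, …, n}`) at which vertex `v` arrives, given the arrival
order `σ` (`σ ⟨t-1⟩` is the vertex arriving at time `t`). -/
def arrivalTime (σ : Equiv.Perm (Fin n)) (v : Fin n) : ℕ := (σ.symm v : ℕ) + 1

/-- The graph `G(t)`: the subgraph of `G(n)` (encoded by the indicator `E` of present
edges) induced by the vertices that have arrived by time `t`. -/
def graphAt (E : EdgeIdx n → Bool) (σ : Equiv.Perm (Fin n)) (t : ℕ) :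
    SimpleGraph (Fin n) where
  Adj u v := u ≠ v ∧ arrivalTime σ u ≤ t ∧ arrivalTime σ v ≤ t ∧
    ∃ p : EdgeIdx n, E p = true ∧
      ((p.1.1 = u ∧ p.1.2 = v) ∨ (p.1.1 = v ∧ p.1.2 = u))
  symm := by
    refine ⟨?_⟩
    rintro u v ⟨h1, h2, h3, p, hp, hor⟩
    exact ⟨h1.symm, h3, h2, p, hp, hor.symm⟩
  loopless := by
    refine ⟨?_⟩
    rintro v ⟨h1, -⟩
    exact h1 rfl

/-- `V_R^t(v)`: the ball of radius `R` around `v` in the graph `G(t)`. -/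
def ballSet (E : EdgeIdx n → Bool) (σ : Equiv.Perm (Fin n)) (t R : ℕ) (v : Fin n) :
    Set (Fin n) :=
  {u | (graphAt E σ t).Reachable v u ∧ (graphAt E σ t).dist v u ≤ R}

/-- `V_R^t(v)` as a finite set. -/
def ballFinset (E : EdgeIdx n → Bool) (σ : Equiv.Perm (Fin n)) (t R : ℕ) (v : Fin n) :
    Finset (Fin n) :=
  Finset.univ.filter (· ∈ ballSet E σ t R v)

/-- The accessible vertex set `𝒱_v^t` (with locality radius `R`):
`𝒱_v^0 = {v}`, and when vertex `v(t+1) = σ ⟨t⟩` arrives, every vertex in the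
radius-`R` ball around `v(t+1)` in `G(t+1)` pools the accessible sets of all
vertices of that ball. -/
def accSet (E : EdgeIdx n → Bool) (σ : Equiv.Perm (Fin n)) (R : ℕ) :
    ℕ → Fin n → Set (Fin n)
  | 0, v => {v}
  | t + 1, v =>
    if h : t < n then
      if v ∈ ballSet E σ (t + 1) R (σ ⟨t, h⟩) then
        ⋃ v' ∈ ballSet E σ (t + 1) R (σ ⟨t, h⟩), accSet E σ R t v'
      else accSet E σ R t v
    else accSet E σ R t v

/-- A full configuration of the streaming SBM with side information:
true labels, noisy labels, edge indicators, and the arrival order. -/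
abbrev ConfigS (n k : ℕ) :=
  (Fin n → Fin k) × (Fin n → Fin k) × (EdgeIdx n → Bool) × Equiv.Perm (Fin n)

/-- A configuration of the streaming SBM without side information. -/
abbrev Config (n k : ℕ) :=
  (Fin n → Fin k) × (EdgeIdx n → Bool) × Equiv.Perm (Fin n)

/-- The probability that the potential edge `p` is present, given the labels:
`a/n` within communities and `b/n` across. -/
def edgeP (k : ℕ) (a b : ℝ) (τ : Fin n → Fin k) (p : EdgeIdx n) : ℝ :=
  if τ p.1.1 = τ p.1.2 then a / n else b / n

/-- The probability mass of a configuration of `StSSBM(n,k,a,b,α)`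
(with side information). -/
def densityS (k : ℕ) (a b α : ℝ) (c : ConfigS n k) : ℝ :=
  ((1 : ℝ) / (k : ℝ) ^ n) * ((1 : ℝ) / (Nat.factorial n : ℝ)) *
    (∏ v : Fin n, if c.2.1 v = c.1 v then 1 - α else α / ((k : ℝ) - 1)) *
    (∏ p : EdgeIdx n,
      if c.2.2.1 p then edgeP k a b c.1 p else 1 - edgeP k a b c.1 p)

/-- The probability mass of a configuration of `StSSBM(n,k,a,b)`
(no side information). -/
def density (k : ℕ) (a b : ℝ) (c : Config n k) : ℝ :=
  ((1 : ℝ) / (k : ℝ) ^ n) * ((1 : ℝ) / (Nat.factorial n : ℝ)) *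
    ∏ p : EdgeIdx n,
      if c.2.1 p then edgeP k a b c.1 p else 1 - edgeP k a b c.1 p

end

noncomputable section
open scoped Classical

variable {n : ℕ}

/-- The belief-propagation log-likelihood-ratio update function
`F(x) = ½ log((e^{2x} a + b)/(e^{2x} b + a))`. -/
def FBP (a b x : ℝ) : ℝ :=
  (1 / 2) * Real.log ((Real.exp (2 * x) * a + b) / (Real.exp (2 * x) * b + a))

/-- The side-information field: `h₁ = ½ log((1−α)/α)` for label `1` (encoded `0 : Fin 2`)
and `h₂ = ½ log(α/(1−α))` for label `2` (encoded `1 : Fin 2`). -/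
def hSide (α : ℝ) (s : Fin 2) : ℝ :=
  if s = 0 then (1 / 2) * Real.log ((1 - α) / α) else (1 / 2) * Real.log (α / (1 - α))

/-- The BP message from `x` to `y` computed from the current messages `M` in the graph
`G(t)`: `h_{τ̃(x)} + Σ_{z ∈ ∂x ∖ {y}} F(M_{z→x})`. -/
def bpMsg (a b α : ℝ) (E : EdgeIdx n → Bool) (σ : Equiv.Perm (Fin n))
    (τ' : Fin n → Fin 2) (M : Fin n → Fin n → ℝ) (t : ℕ) (x y : Fin n) : ℝ :=
  hSide α (τ' x) +
    ∑ z ∈ Finset.univ.filter (fun z => (graphAt E σ t).Adj x z ∧ z ≠ y),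
      FBP a b (M z x)

/-- Step 1 of the arrival of vertex `w = v(t)`: update the messages incoming into `w`,
`M_{x→w} ← h_{τ̃(x)} + Σ_{z ∈ D₁^{t-1}(x)} F(M_{z→x})` for every neighbor `x` of `w`
in `G(t)` (no neighbor of `x` in `G(t−1)` equals `w`, so the exclusion is vacuous). -/
def stepIncoming (a b α : ℝ) (E : EdgeIdx n → Bool) (σ : Equiv.Perm (Fin n))
    (τ' : Fin n → Fin 2) (t : ℕ) (w : Fin n) (M : Fin n → Fin n → ℝ) :
    Fin n → Fin n → ℝ := fun x y =>
  if y = w ∧ (graphAt E σ t).Adj x w then bpMsg a b α E σ τ' M (t - 1) x w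
  else M x y

/-- A neighbor of `y` lying on a shortest path from `y` to `w` in `G(t)`
(an arbitrary but fixed choice). -/
def shortestNbr (E : EdgeIdx n → Bool) (σ : Equiv.Perm (Fin n)) (t : ℕ)
    (w y : Fin n) : Fin n :=
  if h : ∃ x, (graphAt E σ t).Adj y x ∧
      (graphAt E σ t).dist w x + 1 = (graphAt E σ t).dist w y then h.choose
  else y

/-- Layer `r` of the arrival of `w = v(t)`: for every vertex `y` at distance exactly `r`
from `w` in `G(t)`, update the message into `y` from its neighbor on a shortest path
towards `w`. -/
def stepLayer (a b α : ℝ) (E : EdgeIdx n → Bool) (σ : Equiv.Perm (Fin n))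
    (τ' : Fin n → Fin 2) (t r : ℕ) (w : Fin n) (M : Fin n → Fin n → ℝ) :
    Fin n → Fin n → ℝ := fun x y =>
  if (graphAt E σ t).Reachable w y ∧ (graphAt E σ t).dist w y = r ∧
      x = shortestNbr E σ t w y then
    bpMsg a b α E σ τ' M t x y
  else M x y

/-- The state of the messages after the incoming updates and the first `r` layers of
outgoing updates triggered by the arrival of `w = v(t)`. -/
def afterLayers (a b α : ℝ) (E : EdgeIdx n → Bool) (σ : Equiv.Perm (Fin n))
    (τ' : Fin n → Fin 2) (t : ℕ) (w : Fin n) (M : Fin n → Fin n → ℝ) :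
    ℕ → Fin n → Fin n → ℝ
  | 0 => stepIncoming a b α E σ τ' t w M
  | r + 1 => stepLayer a b α E σ τ' t (r + 1) w
      (afterLayers a b α E σ τ' t w M r)

/-- The message state `M^t` of streaming belief propagation with locality radius `R`
after the first `t` arrivals (i.e. just before vertex `v(t+1)` arrives). -/
def msgTraj (a b α : ℝ) (R : ℕ) (E : EdgeIdx n → Bool) (σ : Equiv.Perm (Fin n))
    (τ' : Fin n → Fin 2) : ℕ → Fin n → Fin n → ℝ
  | 0 => fun _ _ => 0
  | t + 1 =>
    if h : t < n then
      afterLayers a b α E σ τ' (t + 1) (σ ⟨t, h⟩) (msgTraj a b α R E σ τ' t) R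
    else msgTraj a b α R E σ τ' t

/-- The final vertex belief `M_u = h_{τ̃(u)} + Σ_{u' ∈ ∂u} F(M_{u'→u})` of streaming BP. -/
def streamBPBelief (a b α : ℝ) (R : ℕ) (E : EdgeIdx n → Bool)
    (σ : Equiv.Perm (Fin n)) (τ' : Fin n → Fin 2) (u : Fin n) : ℝ :=
  hSide α (τ' u) +
    ∑ z ∈ Finset.univ.filter (fun z => (graphAt E σ n).Adj u z),
      FBP a b (msgTraj a b α R E σ τ' n z u)

/-- The label estimate of streaming BP: label `1` (encoded `0`) iff `M_u ≥ 0`. -/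
def streamBPEst (a b α : ℝ) (R : ℕ) (E : EdgeIdx n → Bool)
    (σ : Equiv.Perm (Fin n)) (τ' : Fin n → Fin 2) (u : Fin n) : Fin 2 :=
  if 0 ≤ streamBPBelief a b α R E σ τ' u then 0 else 1

/-- The messages of offline BP after `s` parallel iterations on all directed edges of
`G(n)` (initialized at uniform messages, i.e. zero log-likelihood ratios). -/
def offlineMsg (a b α : ℝ) (E : EdgeIdx n → Bool) (σ : Equiv.Perm (Fin n))
    (τ' : Fin n → Fin 2) : ℕ → Fin n → Fin n → ℝ
  | 0 => fun _ _ => 0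
  | s + 1 => fun x y => bpMsg a b α E σ τ' (offlineMsg a b α E σ τ' s) n x y

/-- The vertex belief of offline BP with radius `R` (i.e. after `R − 1` parallel
iterations). -/
def offlineBPBelief (a b α : ℝ) (R : ℕ) (E : EdgeIdx n → Bool)
    (σ : Equiv.Perm (Fin n)) (τ' : Fin n → Fin 2) (u : Fin n) : ℝ :=
  hSide α (τ' u) +
    ∑ z ∈ Finset.univ.filter (fun z => (graphAt E σ n).Adj u z),
      FBP a b (offlineMsg a b α E σ τ' (R - 1) z u)

/-- The label estimate of offline BP with radius `R`. -/
def offlineBPEst (a b α : ℝ) (R : ℕ) (E : EdgeIdx n → Bool)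
    (σ : Equiv.Perm (Fin n)) (τ' : Fin n → Fin 2) (u : Fin n) : Fin 2 :=
  if 0 ≤ offlineBPBelief a b α R E σ τ' u then 0 else 1

/-- The estimation accuracy
`Q_n(𝒜) = E[max_{π ∈ 𝔖₂} (1/n) Σ_v 1{𝒜(v; G(n), τ̃) = π(τ(v))}]`
of an estimator under `StSSBM(n,2,a,b,α)`. -/
def Qacc2 (n : ℕ) (a b α : ℝ)
    (A : (EdgeIdx n → Bool) → Equiv.Perm (Fin n) → (Fin n → Fin 2) → Fin n → Fin 2) :
    ℝ :=
  ∑ c : ConfigS n 2, densityS 2 a b α c *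
    (Finset.univ.sup' ⟨Equiv.refl (Fin 2), Finset.mem_univ _⟩
      fun π : Equiv.Perm (Fin 2) =>
        (n : ℝ)⁻¹ * ∑ v : Fin n,
          if A c.2.2.1 c.2.2.2 c.2.1 v = π (c.1 v) then (1 : ℝ) else 0)

end

noncomputable section
open scoped Classical

/-- A finite rooted tree whose vertices are (some of the) vertices of `Fin n`,
given by a parent map together with a depth function certifying acyclicity. -/
structure BPTree (n : ℕ) where
  verts : Finset (Fin n)
  root : Fin n
  parent : Fin n → Fin n
  dep : Fin n → ℕ
  root_mem : root ∈ verts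
  dep_root : dep root = 0
  parent_mem : ∀ v ∈ verts, v ≠ root → parent v ∈ verts
  dep_parent : ∀ v ∈ verts, v ≠ root → dep v = dep (parent v) + 1

/-- The set of children of a vertex in a rooted tree. -/
def BPTree.children {n : ℕ} (T : BPTree n) (v : Fin n) : Finset (Fin n) :=
  T.verts.filter fun c => c ≠ T.root ∧ T.parent c = v

/-- The leaves of a rooted tree: its childless vertices. -/
def BPTree.isLeaf {n : ℕ} (T : BPTree n) (v : Fin n) : Prop :=
  v ∈ T.verts ∧ T.children v = ∅

/-- The depth of a rooted tree. -/
def BPTree.depth {n : ℕ} (T : BPTree n) : ℕ :=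
  T.verts.sup T.dep

/-- The bottom-up messages `M̃_{v→pa(v)}` of belief propagation on a rooted tree with
input beliefs `inp` at the leaves, computed with recursion fuel `f`: childless vertices
send their input belief, all other vertices send
`h_{τ̃(v)} + Σ_{c ∈ C(v)} F(M̃_{c→v})`. -/
def MtildeAux {n : ℕ} (T : BPTree n) (a b α : ℝ) (τ' : Fin n → Fin 2)
    (inp : Fin n → ℝ) : ℕ → Fin n → ℝ
  | 0, v => inp v
  | f + 1, v =>
    if T.children v = ∅ then inp v
    else hSide α (τ' v) + ∑ c ∈ T.children v, FBP a b (MtildeAux T a b α τ' inp f c)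

/-- The output of belief propagation on the rooted tree `T` with input beliefs `inp`
at the leaves (Definition of `Bprop`):
`Bprop(u; T, {M_v^input}, τ̃, α, a, b) = h_{τ̃(u)} + Σ_{u' ∈ C(u)} F(M̃_{u'→u})`,
where `u` is the root of `T`. -/
def Bprop {n : ℕ} (T : BPTree n) (a b α : ℝ) (τ' : Fin n → Fin 2)
    (inp : Fin n → ℝ) : ℝ :=
  hSide α (τ' T.root) +
    ∑ c ∈ T.children T.root, FBP a b (MtildeAux T a b α τ' inp T.verts.card c)

end

/-!
Between arrivals a message either keeps its value or is rewritten as the BP update of the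
current messages. Inside the acyclic ball `B_R^n(u)` the neighbours of `v` other than its parent
`p` are exactly its children, so once the subtree of `v` and `p` have arrived, every rewrite of
`v → p` is the tree update of the children's current messages. Such a rewrite does happen at the
last of these arrivals `g`: either `g = p`, or every geodesic from `g` to `p` in the current
graph ends with the edge `v → p`, because geodesics from `u` in the acyclic ball are unique.
Choosing, from the root downwards, the time at which each message is read gives the delays
`t(v)` at the leaves.
-/

open scoped Classical

namespace SimpleGraph

variable {V : Type*} {G : SimpleGraph V}

/-- The closed ball of radius `R` around `u` for the graph distance; vertices that are not
reachable from `u` are excluded explicitly, since `G.dist` is `0` on them. -/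
def distBall (G : SimpleGraph V) (u : V) (R : ℕ) : Set V :=
  {x | G.Reachable u x ∧ G.dist u x ≤ R}

lemma mem_distBall_self {u : V} {R : ℕ} : u ∈ G.distBall u R := by
  simp [distBall]

lemma Walk.support_subset_distBall {u x : V} {R : ℕ} (p : G.Walk u x) (hp : p.length ≤ R) :
    ∀ z ∈ p.support, z ∈ G.distBall u R := fun z hz =>
  ⟨⟨p.takeUntil z hz⟩, (dist_le _).trans ((p.length_takeUntil_le_length hz).trans hp)⟩

lemma dist_eq_length_of_length_add_dist_le {G' : SimpleGraph V} (hle : G' ≤ G) {u g v : V}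
    (w : G'.Walk g v) (h : w.length + G.dist u v ≤ G.dist u g) : G'.dist g v = w.length := by
  have hvg : G.Reachable v g := ⟨(w.mapLe hle).reverse⟩
  have htri : G.dist u g ≤ G.dist u v + G.dist v g := hvg.dist_triangle_right u
  have hanti : G.dist g v ≤ G'.dist g v := Reachable.dist_anti hle ⟨w⟩
  have hcomm : G.dist v g = G.dist g v := dist_comm
  have := dist_le w
  omega

lemma Reachable.exists_adj_dist_add_one_eq {w y : V} (h : G.Reachable w y) (hne : w ≠ y) :
    ∃ x, G.Adj y x ∧ G.dist w x + 1 = G.dist w y := by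
  obtain ⟨p, hp⟩ := h.exists_walk_length_eq_dist
  cases hq : p.reverse with
  | nil => exact absurd rfl hne
  | cons hadj q =>
    refine ⟨_, hadj, le_antisymm ?_ ?_⟩
    · have hlen := congrArg Walk.length hq
      have := dist_le q.reverse
      simp only [Walk.length_reverse, Walk.length_cons] at hlen this
      omega
    · have := hadj.symm.reachable.dist_triangle_right w
      rwa [dist_eq_one_iff_adj.mpr hadj.symm] at this

@[simp] lemma Walk.length_induce {s : Set V} {u x : V} (p : G.Walk u x)
    (hp : ∀ z ∈ p.support, z ∈ s) : (p.induce s hp).length = p.length := by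
  have := congrArg Walk.length (p.map_induce hp)
  rwa [Walk.length_map] at this

lemma exists_walk_induce_distBall {u x : V} {R : ℕ} (hx : x ∈ G.distBall u R) :
    ∃ q : (G.induce (G.distBall u R)).Walk ⟨u, mem_distBall_self⟩ ⟨x, hx⟩,
      q.length = G.dist u x := by
  obtain ⟨p, hp⟩ := hx.1.exists_walk_length_eq_dist
  refine ⟨p.induce _ (p.support_subset_distBall (hp ▸ hx.2)), ?_⟩
  rw [Walk.length_induce, hp]

lemma dist_induce_distBall {u x : V} {R : ℕ} (hx : x ∈ G.distBall u R) :
    (G.induce (G.distBall u R)).dist ⟨u, mem_distBall_self⟩ ⟨x, hx⟩ = G.dist u x := by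
  obtain ⟨q, hq⟩ := exists_walk_induce_distBall hx
  obtain ⟨r, hr⟩ := Reachable.exists_walk_length_eq_dist ⟨q⟩
  have h₁ := dist_le q
  have h₂ : G.dist u x ≤ (r.map (Embedding.induce (G.distBall u R)).toHom).length :=
    dist_le _
  rw [Walk.length_map, hr] at h₂
  omega

section AcyclicBall

variable {u : V} {R : ℕ} (hac : (G.induce (G.distBall u R)).IsAcyclic)
include hac

lemma Walk.eq_of_length_eq_dist {x : V} (hxR : G.dist u x ≤ R) {p q : G.Walk u x}
    (hp : p.length = G.dist u x) (hq : q.length = G.dist u x) : p = q := by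
  have hpB := p.support_subset_distBall (hp ▸ hxR)
  have hqB := q.support_subset_distBall (hq ▸ hxR)
  have hx : x ∈ G.distBall u R := hpB x p.end_mem_support
  have hlen : ∀ (r : G.Walk u x) (hr : ∀ z ∈ r.support, z ∈ G.distBall u R),
      r.length = G.dist u x → (r.induce _ hr).IsPath := fun r hr hlen => by
    refine Walk.isPath_of_length_eq_dist _ ?_
    rw [dist_induce_distBall hx, Walk.length_induce, hlen]
  have := congrArg Subtype.val ((hac.subsingleton_path _ _).elim
    ⟨_, hlen p hpB hp⟩ ⟨_, hlen q hqB hq⟩)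
  simpa using congrArg (Walk.map (Embedding.induce (G.distBall u R)).toHom) this

lemma dist_ne_of_adj_of_mem_distBall {v z : V} (hv : v ∈ G.distBall u R)
    (hz : z ∈ G.distBall u R) (hadj : G.Adj v z) : G.dist u v ≠ G.dist u z := by
  obtain ⟨q, -⟩ := exists_walk_induce_distBall hv
  rw [← dist_induce_distBall hv, ← dist_induce_distBall hz]
  exact hac.dist_ne_of_adj (v := ⟨v, hv⟩) (w := ⟨z, hz⟩) hadj ⟨q⟩

lemma eq_of_adj_of_dist_add_one {x p q : V} (hxR : G.dist u x ≤ R) (hp : G.Adj p x)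
    (hq : G.Adj q x) (hdp : G.dist u p + 1 = G.dist u x) (hdq : G.dist u q + 1 = G.dist u x) :
    p = q := by
  have hx : G.Reachable u x := Reachable.of_dist_ne_zero (by omega)
  obtain ⟨γp, hγp⟩ := (hx.trans hp.symm.reachable).exists_walk_length_eq_dist
  obtain ⟨γq, hγq⟩ := (hx.trans hq.symm.reachable).exists_walk_length_eq_dist
  obtain ⟨rfl, -⟩ := Walk.concat_inj (Walk.eq_of_length_eq_dist hac hxR
    (p := γp.concat hp) (q := γq.concat hq) (by simp [hγp, hdp]) (by simp [hγq, hdq]))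
  rfl

/-- Two neighbours `x`, `v` of `y` through which `g` can be reached from `u` along a
geodesic coincide. -/
lemma eq_of_adj_of_dist_add_dist_le {y x v g : V} (hy : G.Reachable u y)
    (hgR : G.dist u g ≤ R) (hyx : G.Adj y x) (hyv : G.Adj y v)
    (hx : G.Reachable x g) (hv : G.Reachable v g)
    (hxg : G.dist u y + 1 + G.dist x g ≤ G.dist u g)
    (hvg : G.dist u y + 1 + G.dist v g ≤ G.dist u g) : x = v := by
  obtain ⟨γ, hγ⟩ := hy.exists_walk_length_eq_dist
  obtain ⟨P, hP⟩ := hx.exists_walk_length_eq_dist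
  obtain ⟨Q, hQ⟩ := hv.exists_walk_length_eq_dist
  have hA := dist_le (γ.append (.cons hyx P))
  have hB := dist_le (γ.append (.cons hyv Q))
  simp only [Walk.length_append, Walk.length_cons] at hA hB
  have := congrArg (Walk.getVert · (γ.length + 1)) (Walk.eq_of_length_eq_dist hac hgR
    (p := γ.append (.cons hyx P)) (q := γ.append (.cons hyv Q)) (by simp; omega)
    (by simp; omega))
  simpa [Walk.getVert_append] using this

end AcyclicBall

end SimpleGraph

namespace BPTree

variable {n : ℕ} (T : BPTree n)

lemma exists_mem_verts_dep_eq {v : Fin n} (hv : v ∈ T.verts) {j : ℕ} (hj : j ≤ T.dep v) :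
    ∃ z ∈ T.verts, T.dep z = j := by
  induction hd : T.dep v generalizing v with
  | zero => exact ⟨v, hv, by omega⟩
  | succ d ih =>
    rcases Nat.lt_or_ge j (d + 1) with hjd | hjd
    · have hvr : v ≠ T.root := fun h => by simp [h, T.dep_root] at hd
      have hpar := T.dep_parent v hv hvr
      exact ih (T.parent_mem v hv hvr) (by omega) (by omega)
    · exact ⟨v, hv, by omega⟩

lemma depth_lt_card : T.depth < T.verts.card := by
  obtain ⟨z, hz, hzd⟩ := Finset.exists_mem_eq_sup T.verts ⟨_, T.root_mem⟩ T.dep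
  have hsub : Finset.range (T.depth + 1) ⊆ T.verts.image T.dep := fun j hj => by
    obtain ⟨y, hy, rfl⟩ := T.exists_mem_verts_dep_eq hz
      (j := j) (by rw [← hzd]; exact Nat.lt_succ_iff.mp (Finset.mem_range.mp hj))
    exact Finset.mem_image_of_mem _ hy
  have := (Finset.card_le_card hsub).trans Finset.card_image_le
  rw [Finset.card_range] at this
  omega

variable {a b α : ℝ} {τ' : Fin n → Fin 2} {inp : Fin n → ℝ}

lemma mtildeAux_of_children_eq_empty {v : Fin n} (hv : T.children v = ∅) (f : ℕ) :
    MtildeAux T a b α τ' inp f v = inp v := by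
  cases f <;> simp [MtildeAux, hv]

lemma mtildeAux_succ_of_children_ne_empty {v : Fin n} (hv : T.children v ≠ ∅) (f : ℕ) :
    MtildeAux T a b α τ' inp (f + 1) v =
      hSide α (τ' v) + ∑ c ∈ T.children v, FBP a b (MtildeAux T a b α τ' inp f c) := by
  simp [MtildeAux, hv]

def desc (v : Fin n) : Finset (Fin n) :=
  T.verts.filter fun x => T.dep v ≤ T.dep x ∧ T.parent^[T.dep x - T.dep v] x = v

variable {T} {v x : Fin n}

lemma mem_desc : x ∈ T.desc v ↔
    x ∈ T.verts ∧ T.dep v ≤ T.dep x ∧ T.parent^[T.dep x - T.dep v] x = v := by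
  simp [desc]

lemma self_mem_desc (hv : v ∈ T.verts) : v ∈ T.desc v :=
  mem_desc.2 ⟨hv, le_rfl, by simp⟩

lemma dep_lt_of_mem_desc (hx : x ∈ T.desc v) (hxv : x ≠ v) : T.dep v < T.dep x := by
  obtain ⟨-, hle, hit⟩ := mem_desc.1 hx
  refine lt_of_le_of_ne hle fun h => hxv ?_
  rwa [h, Nat.sub_self, Function.iterate_zero_apply] at hit

lemma parent_mem_desc (hx : x ∈ T.desc v) (hxv : x ≠ v) :
    T.parent x ∈ T.desc v ∧ T.dep (T.parent x) + 1 = T.dep x := by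
  have hlt := dep_lt_of_mem_desc hx hxv
  obtain ⟨hxT, -, hit⟩ := mem_desc.1 hx
  have hxr : x ≠ T.root := fun h => by simp [h, T.dep_root] at hlt
  have hdep := T.dep_parent x hxT hxr
  refine ⟨mem_desc.2 ⟨T.parent_mem x hxT hxr, by omega, ?_⟩, hdep.symm⟩
  rwa [← Function.iterate_succ_apply, show (T.dep (T.parent x) - T.dep v).succ =
    T.dep x - T.dep v by omega]

lemma mem_desc_of_mem_children (hx : x ∈ T.children v) : x ∈ T.desc v := by
  obtain ⟨hxT, hxr, rfl⟩ := Finset.mem_filter.1 hx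
  have := T.dep_parent x hxT hxr
  exact mem_desc.2 ⟨hxT, by omega, by rw [show T.dep x - T.dep (T.parent x) = 1 by omega]; rfl⟩

lemma desc_subset_of_mem_children (hx : x ∈ T.children v) : T.desc x ⊆ T.desc v := by
  intro z hz
  obtain ⟨hxT, hxr, rfl⟩ := Finset.mem_filter.1 hx
  obtain ⟨hzT, hle, hit⟩ := mem_desc.1 hz
  have := T.dep_parent x hxT hxr
  refine mem_desc.2 ⟨hzT, by omega, ?_⟩
  rw [show T.dep z - T.dep (T.parent x) = 1 + (T.dep z - T.dep x) by omega,
    Function.iterate_add_apply, hit]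
  rfl

lemma exists_walk_of_mem_desc {G : SimpleGraph (Fin n)}
    (hG : ∀ x ∈ T.desc v, x ≠ v → G.Adj x (T.parent x)) {g : Fin n} (hg : g ∈ T.desc v) :
    ∃ w : G.Walk g v, w.length = T.dep g - T.dep v := by
  induction hk : T.dep g - T.dep v generalizing g with
  | zero =>
    obtain ⟨-, -, hit⟩ := mem_desc.1 hg
    rw [hk, Function.iterate_zero_apply] at hit
    exact hit ▸ ⟨.nil, rfl⟩
  | succ k ih =>
    have hgv : g ≠ v := by rintro rfl; simp at hk
    obtain ⟨hpg, hdep⟩ := parent_mem_desc hg hgv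
    obtain ⟨w, hw⟩ := ih hpg (by omega)
    exact ⟨.cons (hG g hg hgv) w, by simp [hw]⟩

end BPTree

section StreamingBP

variable {n : ℕ}

lemma one_le_arrivalTime (σ : Equiv.Perm (Fin n)) (v : Fin n) : 1 ≤ arrivalTime σ v :=
  Nat.succ_pos _

lemma arrivalTime_le (σ : Equiv.Perm (Fin n)) (v : Fin n) : arrivalTime σ v ≤ n :=
  (σ.symm v).isLt

lemma arrivalTime_injective (σ : Equiv.Perm (Fin n)) : Function.Injective (arrivalTime σ) :=
  fun _ _ h => σ.symm.injective (Fin.ext (Nat.succ_injective h))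

lemma apply_eq_of_arrivalTime_eq {σ : Equiv.Perm (Fin n)} {w : Fin n} {t : ℕ}
    (hw : arrivalTime σ w = t + 1) (ht : t < n) : σ ⟨t, ht⟩ = w := by
  rw [← Equiv.eq_symm_apply]
  ext
  simp only [arrivalTime] at hw
  change t = _
  omega

def lastArrival (σ : Equiv.Perm (Fin n)) (T : BPTree n) (v : Fin n) : ℕ :=
  (insert (T.parent v) (T.desc v)).sup (arrivalTime σ)

section LastArrival

variable {σ : Equiv.Perm (Fin n)} {T : BPTree n} {v x : Fin n}

lemma arrivalTime_le_lastArrival (hx : x ∈ insert (T.parent v) (T.desc v)) :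
    arrivalTime σ x ≤ lastArrival σ T v :=
  Finset.le_sup hx

lemma lastArrival_le (v : Fin n) : lastArrival σ T v ≤ n :=
  Finset.sup_le fun x _ => arrivalTime_le σ x

lemma one_le_lastArrival (v : Fin n) : 1 ≤ lastArrival σ T v :=
  (one_le_arrivalTime σ _).trans (arrivalTime_le_lastArrival (Finset.mem_insert_self _ _))

lemma lastArrival_le_of_mem_children (hx : x ∈ T.children v) :
    lastArrival σ T x ≤ lastArrival σ T v := by
  refine Finset.sup_le fun z hz => arrivalTime_le_lastArrival ?_
  rcases Finset.mem_insert.1 hz with rfl | hz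
  · obtain ⟨hxT, hxr, hpx⟩ := Finset.mem_filter.1 hx
    rw [hpx]
    exact Finset.mem_insert_of_mem (BPTree.self_mem_desc (hpx ▸ T.parent_mem x hxT hxr))
  · exact Finset.mem_insert_of_mem (BPTree.desc_subset_of_mem_children hx hz)

end LastArrival

section StreamingGraph

open SimpleGraph

variable {E : EdgeIdx n → Bool} {σ : Equiv.Perm (Fin n)} {t : ℕ}

lemma ballSet_eq_distBall (R : ℕ) (v : Fin n) :
    ballSet E σ t R v = (graphAt E σ t).distBall v R := rfl

lemma graphAt_adj_iff {x y : Fin n} : (graphAt E σ t).Adj x y ↔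
    (graphAt E σ n).Adj x y ∧ arrivalTime σ x ≤ t ∧ arrivalTime σ y ≤ t := by
  constructor
  · rintro ⟨h₁, h₂, h₃, h₄⟩
    exact ⟨⟨h₁, arrivalTime_le σ x, arrivalTime_le σ y, h₄⟩, h₂, h₃⟩
  · rintro ⟨⟨h₁, -, -, h₄⟩, h₂, h₃⟩
    exact ⟨h₁, h₂, h₃, h₄⟩

lemma graphAt_le : graphAt E σ t ≤ graphAt E σ n := fun _ _ h => (graphAt_adj_iff.1 h).1

lemma graphAt_succ_adj_iff {w x z : Fin n} (hw : arrivalTime σ w = t + 1) (hx : x ≠ w)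
    (hz : z ≠ w) : (graphAt E σ (t + 1)).Adj x z ↔ (graphAt E σ t).Adj x z := by
  have hx' : arrivalTime σ x ≠ t + 1 := fun h => hx (arrivalTime_injective σ (h.trans hw.symm))
  have hz' : arrivalTime σ z ≠ t + 1 := fun h => hz (arrivalTime_injective σ (h.trans hw.symm))
  rw [graphAt_adj_iff, graphAt_adj_iff (t := t)]
  exact and_congr_right' (by constructor <;> rintro ⟨h₁, h₂⟩ <;> constructor <;> omega)

lemma shortestNbr_spec {w x y : Fin n} (hx : (graphAt E σ t).Adj y x)
    (hd : (graphAt E σ t).dist w x + 1 = (graphAt E σ t).dist w y) :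
    (graphAt E σ t).Adj y (shortestNbr E σ t w y) ∧
      (graphAt E σ t).dist w (shortestNbr E σ t w y) + 1 = (graphAt E σ t).dist w y := by
  have h : ∃ x, (graphAt E σ t).Adj y x ∧
      (graphAt E σ t).dist w x + 1 = (graphAt E σ t).dist w y := ⟨x, hx, hd⟩
  rw [shortestNbr, dif_pos h]
  exact h.choose_spec

lemma shortestNbr_spec_of_reachable {w y : Fin n} (hr : (graphAt E σ t).Reachable w y)
    (hne : y ≠ w) :
    (graphAt E σ t).Adj y (shortestNbr E σ t w y) ∧
      (graphAt E σ t).dist w (shortestNbr E σ t w y) + 1 = (graphAt E σ t).dist w y :=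
  let ⟨_, hx⟩ := hr.exists_adj_dist_add_one_eq hne.symm
  shortestNbr_spec hx.1 hx.2

lemma shortestNbr_self (w : Fin n) : shortestNbr E σ t w w = w := by
  rw [shortestNbr, dif_neg]
  rintro ⟨x, -, hx⟩
  simp at hx

lemma shortestNbr_eq_of_forall {w v y : Fin n} (hv : (graphAt E σ t).Adj y v)
    (hd : (graphAt E σ t).dist w v + 1 = (graphAt E σ t).dist w y)
    (huniq : ∀ x, (graphAt E σ t).Adj y x →
      (graphAt E σ t).dist w x + 1 = (graphAt E σ t).dist w y → x = v) :
    shortestNbr E σ t w y = v :=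
  huniq _ (shortestNbr_spec hv hd).1 (shortestNbr_spec hv hd).2

lemma shortestNbr_of_adj {w y : Fin n} (hadj : (graphAt E σ t).Adj w y) :
    shortestNbr E σ t w y = w := by
  have hwy := dist_eq_one_iff_adj.2 hadj
  refine shortestNbr_eq_of_forall hadj.symm (by simp [hwy]) fun x hyx hd => ?_
  exact ((hadj.reachable.trans hyx.reachable).dist_eq_zero_iff.1 (by omega)).symm

end StreamingGraph

section Dynamics

open SimpleGraph

variable {a b α : ℝ} {E : EdgeIdx n → Bool} {σ : Equiv.Perm (Fin n)} {τ' : Fin n → Fin 2}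

lemma afterLayers_apply (t : ℕ) (w : Fin n) (M : Fin n → Fin n → ℝ) (r : ℕ) (x y : Fin n) :
    afterLayers a b α E σ τ' t w M r x y =
      if y = w ∧ (graphAt E σ t).Adj x w then bpMsg a b α E σ τ' M (t - 1) x w
      else if 1 ≤ (graphAt E σ t).dist w y ∧ (graphAt E σ t).dist w y ≤ r ∧
          x = shortestNbr E σ t w y then
        bpMsg a b α E σ τ'
          (afterLayers a b α E σ τ' t w M ((graphAt E σ t).dist w y - 1)) t x y
      else M x y := by
  induction r with
  | zero =>
    simp only [afterLayers, stepIncoming]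
    split_ifs <;> first | rfl | omega
  | succ r ih =>
    have hreach : 1 ≤ (graphAt E σ t).dist w y → (graphAt E σ t).Reachable w y :=
      fun h => Reachable.of_dist_ne_zero (by omega)
    rw [afterLayers, stepLayer, ih]
    split_ifs <;> simp_all <;> omega

lemma afterLayers_apply_of_dist_le {t : ℕ} {w : Fin n} {M : Fin n → Fin n → ℝ} {r r' : ℕ}
    {z x : Fin n} (hr : (graphAt E σ t).dist w x ≤ r) (hr' : (graphAt E σ t).dist w x ≤ r') :
    afterLayers a b α E σ τ' t w M r z x = afterLayers a b α E σ τ' t w M r' z x := by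
  simp only [afterLayers_apply, hr, hr', true_and]

lemma bpMsg_congr {M M' : Fin n → Fin n → ℝ} {t : ℕ} {x y : Fin n}
    (h : ∀ z, (graphAt E σ t).Adj x z → z ≠ y → M z x = M' z x) :
    bpMsg a b α E σ τ' M t x y = bpMsg a b α E σ τ' M' t x y := by
  simp only [bpMsg]
  congr 1
  exact Finset.sum_congr rfl fun z hz => by
    rw [h z (Finset.mem_filter.1 hz).2.1 (Finset.mem_filter.1 hz).2.2]

lemma bpMsg_succ_of_arrivalTime_eq {M : Fin n → Fin n → ℝ} {t : ℕ} {w x : Fin n}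
    (hw : arrivalTime σ w = t + 1) (hx : x ≠ w) :
    bpMsg a b α E σ τ' M (t + 1) x w = bpMsg a b α E σ τ' M t x w := by
  simp only [bpMsg]
  congr 1
  refine Finset.sum_congr (Finset.filter_congr fun z _ => ?_) fun _ _ => rfl
  exact and_congr_left fun hz => graphAt_succ_adj_iff hw hx hz

variable {R : ℕ}

lemma msgTraj_succ {t : ℕ} {w : Fin n} (hw : arrivalTime σ w = t + 1) :
    msgTraj a b α R E σ τ' (t + 1) =
      afterLayers a b α E σ τ' (t + 1) w (msgTraj a b α R E σ τ' t) R := by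
  have ht : t < n := by have := arrivalTime_le σ w; omega
  rw [msgTraj, dif_pos ht, apply_eq_of_arrivalTime_eq hw ht]

lemma msgTraj_succ_of_adj {t : ℕ} {w x : Fin n} (hw : arrivalTime σ w = t + 1)
    (hx : (graphAt E σ (t + 1)).Adj x w) :
    msgTraj a b α R E σ τ' (t + 1) x w =
      bpMsg a b α E σ τ' (msgTraj a b α R E σ τ' (t + 1)) (t + 1) x w := by
  rw [msgTraj_succ hw, afterLayers_apply, if_pos ⟨rfl, hx⟩, Nat.add_sub_cancel,
    bpMsg_succ_of_arrivalTime_eq hw hx.ne]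
  refine bpMsg_congr fun z _ hzw => ?_
  rw [afterLayers_apply, if_neg fun h => hx.ne h.1, if_neg]
  rintro ⟨-, -, rfl⟩
  exact hzw (shortestNbr_of_adj hx.symm)

lemma msgTraj_succ_of_shortestNbr {t : ℕ} {w x y : Fin n} (hw : arrivalTime σ w = t + 1)
    (hy : 1 ≤ (graphAt E σ (t + 1)).dist w y) (hR : (graphAt E σ (t + 1)).dist w y ≤ R)
    (hx : x = shortestNbr E σ (t + 1) w y) :
    msgTraj a b α R E σ τ' (t + 1) x y =
      bpMsg a b α E σ τ' (msgTraj a b α R E σ τ' (t + 1)) (t + 1) x y := by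
  have hyw : y ≠ w := by rintro rfl; simp at hy
  have hdx := (shortestNbr_spec_of_reachable
    (Reachable.of_dist_ne_zero (G := graphAt E σ (t + 1)) (by omega)) hyw).2
  rw [← hx] at hdx
  rw [msgTraj_succ hw, afterLayers_apply, if_neg fun h => hyw h.1, if_pos ⟨hy, hR, hx⟩]
  exact bpMsg_congr fun z _ _ => afterLayers_apply_of_dist_le (by omega) (by omega)

lemma msgTraj_succ_eq_or {t : ℕ} (ht : t < n) (x y : Fin n) :
    msgTraj a b α R E σ τ' (t + 1) x y = msgTraj a b α R E σ τ' t x y ∨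
      msgTraj a b α R E σ τ' (t + 1) x y =
        bpMsg a b α E σ τ' (msgTraj a b α R E σ τ' (t + 1)) (t + 1) x y := by
  set w := σ ⟨t, ht⟩
  have hw : arrivalTime σ w = t + 1 := by simp [w, arrivalTime]
  by_cases h₁ : y = w ∧ (graphAt E σ (t + 1)).Adj x w
  · obtain ⟨rfl, h⟩ := h₁
    exact .inr (msgTraj_succ_of_adj hw h)
  by_cases h₂ : 1 ≤ (graphAt E σ (t + 1)).dist w y ∧ (graphAt E σ (t + 1)).dist w y ≤ R ∧
      x = shortestNbr E σ (t + 1) w y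
  · exact .inr (msgTraj_succ_of_shortestNbr hw h₂.1 h₂.2.1 h₂.2.2)
  · left
    rw [msgTraj_succ hw, afterLayers_apply, if_neg h₁, if_neg h₂]

end Dynamics

section BallTree

open SimpleGraph

variable {E : EdgeIdx n → Bool} {σ : Equiv.Perm (Fin n)} {R : ℕ} {u : Fin n}

lemma mem_ballFinset {t : ℕ} {v x : Fin n} :
    x ∈ ballFinset E σ t R v ↔ x ∈ (graphAt E σ t).distBall v R := by
  rw [ballFinset, Finset.mem_filter]
  exact and_iff_right (Finset.mem_univ x)

variable (E σ R u) in
noncomputable def ballTree : BPTree n where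
  verts := ballFinset E σ n R u
  root := u
  parent := shortestNbr E σ n u
  dep := (graphAt E σ n).dist u
  root_mem := mem_ballFinset.2 mem_distBall_self
  dep_root := dist_self
  parent_mem v hv hvu := by
    obtain ⟨hr, hR⟩ := mem_ballFinset.1 hv
    have hs := shortestNbr_spec_of_reachable hr hvu
    exact mem_ballFinset.2 ⟨hr.trans hs.1.reachable, by omega⟩
  dep_parent v hv hvu := (shortestNbr_spec_of_reachable (mem_ballFinset.1 hv).1 hvu).2.symm

lemma mem_children_ballTree {v c : Fin n} :
    c ∈ (ballTree E σ R u).children v ↔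
      c ∈ (graphAt E σ n).distBall u R ∧ c ≠ u ∧ shortestNbr E σ n u c = v := by
  rw [BPTree.children, Finset.mem_filter]
  exact and_congr_left' mem_ballFinset

lemma adj_parent_of_lastArrival_le {v : Fin n} {s : ℕ} (hv : v ∈ (graphAt E σ n).distBall u R)
    (hvu : v ≠ u) (hs : lastArrival σ (ballTree E σ R u) v ≤ s) :
    (graphAt E σ s).Adj v (shortestNbr E σ n u v) :=
  graphAt_adj_iff.2 ⟨(shortestNbr_spec_of_reachable hv.1 hvu).1,
    (arrivalTime_le_lastArrival (Finset.mem_insert_of_mem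
      (BPTree.self_mem_desc (mem_ballFinset.2 hv)))).trans hs,
    (arrivalTime_le_lastArrival (Finset.mem_insert_self _ _)).trans hs⟩

lemma exists_walk_of_mem_desc_ballTree {v g : Fin n} {s : ℕ}
    (hg : g ∈ (ballTree E σ R u).desc v) (hs : lastArrival σ (ballTree E σ R u) v ≤ s) :
    ∃ W : (graphAt E σ s).Walk g v,
      W.length = (graphAt E σ n).dist u g - (graphAt E σ n).dist u v := by
  have harr : ∀ x ∈ (ballTree E σ R u).desc v, arrivalTime σ x ≤ s :=
    fun x hx => (arrivalTime_le_lastArrival (Finset.mem_insert_of_mem hx)).trans hs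
  refine (ballTree E σ R u).exists_walk_of_mem_desc (fun x hx hxv => ?_) hg
  have hxu : x ≠ u := by
    rintro rfl
    exact absurd (BPTree.dep_lt_of_mem_desc hx hxv) (by simp [ballTree])
  exact graphAt_adj_iff.2 ⟨(shortestNbr_spec_of_reachable
    (mem_ballFinset.1 (BPTree.mem_desc.1 hx).1).1 hxu).1,
    harr x hx, harr _ (BPTree.parent_mem_desc hx hxv).1⟩

variable (hac : ((graphAt E σ n).induce (ballSet E σ n R u)).IsAcyclic)
include hac

lemma mem_children_ballTree_iff_adj {v c : Fin n} (hv : v ∈ (graphAt E σ n).distBall u R)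
    (hvR : (graphAt E σ n).dist u v < R) :
    c ∈ (ballTree E σ R u).children v ↔
      (graphAt E σ n).Adj v c ∧ c ≠ shortestNbr E σ n u v := by
  rw [mem_children_ballTree]
  constructor
  · rintro ⟨hc, hcu, rfl⟩
    have hs := shortestNbr_spec_of_reachable hc.1 hcu
    refine ⟨hs.1.symm, fun h => ?_⟩
    by_cases hvu : shortestNbr E σ n u c = u
    · rw [hvu, shortestNbr_self] at h
      exact hcu h
    · have := (shortestNbr_spec_of_reachable (hc.1.trans hs.1.reachable) hvu).2
      rw [← h] at this
      omega
  · rintro ⟨hadj, hne⟩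
    have htri := hadj.reachable.dist_triangle_right u
    rw [dist_eq_one_iff_adj.2 hadj] at htri
    have hc : c ∈ (graphAt E σ n).distBall u R := ⟨hv.1.trans hadj.reachable, by omega⟩
    have hdne := dist_ne_of_adj_of_mem_distBall hac hv hc hadj
    rcases hadj.diff_dist_adj (u := u) with h | h | h
    · exact absurd h.symm hdne
    · have hcu : c ≠ u := by rintro rfl; simp at h
      have hs := shortestNbr_spec_of_reachable hc.1 hcu
      exact ⟨hc, hcu, eq_of_adj_of_dist_add_one hac hc.2 hs.1.symm hadj hs.2 h.symm⟩
    · have hvu : v ≠ u := by rintro rfl; rw [dist_self] at h hdne; omega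
      have hs := shortestNbr_spec_of_reachable hv.1 hvu
      exact absurd (eq_of_adj_of_dist_add_one hac hv.2 hadj.symm hs.1.symm (by omega) hs.2) hne

lemma filter_adj_eq_children_ballTree {v : Fin n} {s : ℕ}
    (hv : v ∈ (graphAt E σ n).distBall u R) (hvR : (graphAt E σ n).dist u v < R)
    (hs : lastArrival σ (ballTree E σ R u) v ≤ s) :
    Finset.univ.filter (fun z => (graphAt E σ s).Adj v z ∧ z ≠ shortestNbr E σ n u v) =
      (ballTree E σ R u).children v := by
  ext c
  rw [Finset.mem_filter, mem_children_ballTree_iff_adj hac hv hvR, graphAt_adj_iff]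
  have hvT : v ∈ (ballTree E σ R u).desc v := BPTree.self_mem_desc (mem_ballFinset.2 hv)
  refine ⟨fun h => ⟨h.2.1.1, h.2.2⟩, fun ⟨hadj, hne⟩ => ⟨Finset.mem_univ c,
    ⟨hadj, (arrivalTime_le_lastArrival (Finset.mem_insert_of_mem hvT)).trans hs, ?_⟩, hne⟩⟩
  have hc := (mem_children_ballTree_iff_adj hac hv hvR).2 ⟨hadj, hne⟩
  exact (arrivalTime_le_lastArrival
    (Finset.mem_insert_of_mem (BPTree.mem_desc_of_mem_children hc))).trans hs

lemma bpMsg_parent_ballTree {a b α : ℝ} {τ' : Fin n → Fin 2} {v : Fin n} {s : ℕ}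
    (hv : v ∈ (graphAt E σ n).distBall u R) (hvR : (graphAt E σ n).dist u v < R)
    (hs : lastArrival σ (ballTree E σ R u) v ≤ s) (M : Fin n → Fin n → ℝ) :
    bpMsg a b α E σ τ' M s v (shortestNbr E σ n u v) =
      hSide α (τ' v) + ∑ c ∈ (ballTree E σ R u).children v, FBP a b (M c v) := by
  rw [bpMsg, filter_adj_eq_children_ballTree hac hv hvR hs]

/-- Once the subtree of `v` and its parent `p` have arrived, every geodesic of `G(s)` from a
descendant `g` to `p` ends with the edge `v → p`, since geodesics from `u` in the acyclic ball
are unique; so the layered updates triggered by the arrival of `g` include `v → p`. -/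
lemma shortestNbr_parent_of_mem_desc {v g : Fin n} {s : ℕ}
    (hv : v ∈ (graphAt E σ n).distBall u R) (hvu : v ≠ u)
    (hg : g ∈ (ballTree E σ R u).desc v) (hs : lastArrival σ (ballTree E σ R u) v ≤ s) :
    (graphAt E σ s).dist g (shortestNbr E σ n u v) =
        (graphAt E σ n).dist u g - (graphAt E σ n).dist u v + 1 ∧
      shortestNbr E σ s g (shortestNbr E σ n u v) = v := by
  have hvp := shortestNbr_spec_of_reachable hv.1 hvu
  have hpv := (adj_parent_of_lastArrival_le hv hvu hs).symm
  set p := shortestNbr E σ n u v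
  obtain ⟨W, hW⟩ := exists_walk_of_mem_desc_ballTree hg hs
  obtain ⟨hgT, hvg, -⟩ := BPTree.mem_desc.1 hg
  have hgB := mem_ballFinset.1 hgT
  change (graphAt E σ n).dist u v ≤ (graphAt E σ n).dist u g at hvg
  have hgv : (graphAt E σ s).dist g v = W.length :=
    dist_eq_length_of_length_add_dist_le (u := u) graphAt_le W (by omega)
  have hgp : (graphAt E σ s).dist g p = W.length + 1 := by
    simpa using dist_eq_length_of_length_add_dist_le (u := u) graphAt_le (W.concat hpv.symm)
      (by rw [Walk.length_concat]; omega)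
  refine ⟨by omega, shortestNbr_eq_of_forall hpv (by omega) fun x hpx hx => ?_⟩
  have hgx : (graphAt E σ s).Reachable g x := ⟨(W.concat hpv.symm).concat hpx⟩
  have hxg := hgx.dist_anti (graphAt_le (t := s))
  have hvg' := Reachable.dist_anti (graphAt_le (t := s)) ⟨W⟩
  rw [SimpleGraph.dist_comm] at hxg hvg'
  exact eq_of_adj_of_dist_add_dist_le hac (hv.1.trans hvp.1.reachable) hgB.2 (graphAt_le hpx)
    hvp.1.symm (hgx.mono graphAt_le).symm (Reachable.mono graphAt_le ⟨W⟩).symm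
    (by omega) (by omega)

variable {a b α : ℝ} {τ' : Fin n → Fin 2}

lemma msgTraj_lastArrival {v : Fin n} (hv : v ∈ (graphAt E σ n).distBall u R) (hvu : v ≠ u) :
    msgTraj a b α R E σ τ' (lastArrival σ (ballTree E σ R u) v) v (shortestNbr E σ n u v) =
      bpMsg a b α E σ τ' (msgTraj a b α R E σ τ' (lastArrival σ (ballTree E σ R u) v))
        (lastArrival σ (ballTree E σ R u) v) v (shortestNbr E σ n u v) := by
  obtain ⟨g, hg, hgL⟩ := Finset.exists_mem_eq_sup
    (insert (shortestNbr E σ n u v) ((ballTree E σ R u).desc v))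
    ⟨_, Finset.mem_insert_self _ _⟩ (arrivalTime σ)
  change lastArrival σ (ballTree E σ R u) v = arrivalTime σ g at hgL
  obtain ⟨t, ht⟩ : ∃ t, lastArrival σ (ballTree E σ R u) v = t + 1 :=
    ⟨_, (Nat.succ_pred_eq_of_pos (one_le_lastArrival v)).symm⟩
  have hw : arrivalTime σ g = t + 1 := hgL ▸ ht
  rw [ht]
  rcases Finset.mem_insert.1 hg with rfl | hgd
  · exact msgTraj_succ_of_adj hw (adj_parent_of_lastArrival_le hv hvu ht.le)
  · obtain ⟨hd, hsh⟩ := shortestNbr_parent_of_mem_desc hac hv hvu hgd ht.le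
    obtain ⟨hgT, hvg, -⟩ := BPTree.mem_desc.1 hgd
    have hgR : (graphAt E σ n).dist u g ≤ R := (mem_ballFinset.1 hgT).2
    change (graphAt E σ n).dist u v ≤ (graphAt E σ n).dist u g at hvg
    have hv0 := hv.1.pos_dist_of_ne hvu.symm
    exact msgTraj_succ_of_shortestNbr hw (by omega) (by omega) hsh.symm

lemma exists_msgTraj_parent_eq {v : Fin n} (hv : v ∈ (graphAt E σ n).distBall u R)
    (hvu : v ≠ u) (hvR : (graphAt E σ n).dist u v < R) {t : ℕ}
    (hLt : lastArrival σ (ballTree E σ R u) v ≤ t) (htn : t ≤ n) :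
    ∃ s, lastArrival σ (ballTree E σ R u) v ≤ s ∧ s ≤ t ∧
      msgTraj a b α R E σ τ' t v (shortestNbr E σ n u v) = hSide α (τ' v) +
        ∑ c ∈ (ballTree E σ R u).children v, FBP a b (msgTraj a b α R E σ τ' s c v) := by
  induction t, hLt using Nat.le_induction with
  | base => exact ⟨_, le_rfl, le_rfl, (msgTraj_lastArrival hac hv hvu).trans
      (bpMsg_parent_ballTree hac hv hvR le_rfl _)⟩
  | succ t hLt ih =>
    rcases msgTraj_succ_eq_or (R := R) (a := a) (b := b) (α := α) (τ' := τ') (E := E)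
      (by omega : t < n) v (shortestNbr E σ n u v) with h | h
    · obtain ⟨s, h₁, h₂, h₃⟩ := ih (by omega)
      exact ⟨s, h₁, by omega, h.trans h₃⟩
    · exact ⟨t + 1, by omega, le_rfl, h.trans (bpMsg_parent_ballTree hac hv hvR (by omega) _)⟩

lemma filter_adj_root_eq_children_ballTree (hR : 0 < R) :
    Finset.univ.filter (fun z => (graphAt E σ n).Adj u z) = (ballTree E σ R u).children u := by
  rw [← filter_adj_eq_children_ballTree hac mem_distBall_self (by simpa using hR)
    (lastArrival_le u), shortestNbr_self]
  exact Finset.filter_congr fun z _ => (and_iff_left_of_imp fun h => h.ne').symm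

end BallTree

/-- `delaySchedule pa S t₀ k v` is the time assigned to a vertex `v` at depth `k + 1`. -/
def delaySchedule {β : Type*} (pa : β → β) (S : β → ℕ → ℕ) (t₀ : ℕ) : ℕ → β → ℕ
  | 0, _ => t₀
  | k + 1, v => S (pa v) (delaySchedule pa S t₀ k (pa v))

section Delays

open SimpleGraph

variable {a b α : ℝ} {E : EdgeIdx n → Bool} {σ : Equiv.Perm (Fin n)} {τ' : Fin n → Fin 2}
  {R : ℕ} {u : Fin n} {S : Fin n → ℕ → ℕ}
  (hS : ∀ v ∈ (graphAt E σ n).distBall u R, v ≠ u → (graphAt E σ n).dist u v < R →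
    ∀ t, lastArrival σ (ballTree E σ R u) v ≤ t → t ≤ n →
      lastArrival σ (ballTree E σ R u) v ≤ S v t ∧ S v t ≤ t ∧
      msgTraj a b α R E σ τ' t v (shortestNbr E σ n u v) = hSide α (τ' v) +
        ∑ c ∈ (ballTree E σ R u).children v, FBP a b (msgTraj a b α R E σ τ' (S v t) c v))
include hS

lemma lastArrival_le_delaySchedule (k : ℕ) {v : Fin n} (hv : v ∈ (graphAt E σ n).distBall u R)
    (hk : (graphAt E σ n).dist u v = k + 1) :
    lastArrival σ (ballTree E σ R u) v ≤ delaySchedule (shortestNbr E σ n u) S n k v ∧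
      delaySchedule (shortestNbr E σ n u) S n k v ≤ n := by
  induction k generalizing v with
  | zero => exact ⟨lastArrival_le v, le_rfl⟩
  | succ k ih =>
    have hvu : v ≠ u := by rintro rfl; simp at hk
    have hvp := shortestNbr_spec_of_reachable hv.1 hvu
    have hp : shortestNbr E σ n u v ∈ (graphAt E σ n).distBall u R :=
      ⟨hv.1.trans hvp.1.reachable, by have := hv.2; omega⟩
    have hpu : shortestNbr E σ n u v ≠ u := by
      intro h
      rw [h, dist_self] at hvp
      omega
    have hvc : v ∈ (ballTree E σ R u).children (shortestNbr E σ n u v) :=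
      mem_children_ballTree.2 ⟨hv, hvu, rfl⟩
    obtain ⟨ih₁, ih₂⟩ := ih hp (by omega)
    obtain ⟨h₁, h₂, -⟩ := hS _ hp hpu (by have := hv.2; omega) _ ih₁ ih₂
    exact ⟨(lastArrival_le_of_mem_children hvc).trans h₁, h₂.trans ih₂⟩

lemma mtildeAux_ballTree (f : ℕ) {v : Fin n} (hv : v ∈ (graphAt E σ n).distBall u R)
    (hvu : v ≠ u) (hf : (ballTree E σ R u).depth - (graphAt E σ n).dist u v ≤ f) :
    MtildeAux (ballTree E σ R u) a b α τ' (fun z => msgTraj a b α R E σ τ'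
        (delaySchedule (shortestNbr E σ n u) S n ((graphAt E σ n).dist u z - 1) z) z
        (shortestNbr E σ n u z)) f v =
      msgTraj a b α R E σ τ'
        (delaySchedule (shortestNbr E σ n u) S n ((graphAt E σ n).dist u v - 1) v) v
        (shortestNbr E σ n u v) := by
  induction f generalizing v with
  | zero => rfl
  | succ f ih =>
    by_cases hc : (ballTree E σ R u).children v = ∅
    · exact BPTree.mtildeAux_of_children_eq_empty _ hc _
    obtain ⟨c₀, hc₀⟩ := Finset.nonempty_of_ne_empty hc
    obtain ⟨hc₀B, hc₀u, hc₀v⟩ := mem_children_ballTree.1 hc₀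
    have hd₀ := (shortestNbr_spec_of_reachable hc₀B.1 hc₀u).2
    rw [hc₀v] at hd₀
    have hv0 := hv.1.pos_dist_of_ne hvu.symm
    obtain ⟨hL, htn⟩ := lastArrival_le_delaySchedule hS ((graphAt E σ n).dist u v - 1) hv
      (by omega)
    have hc₀R : (graphAt E σ n).dist u c₀ ≤ R := hc₀B.2
    obtain ⟨-, -, hmsg⟩ := hS v hv hvu (by omega) _ hL htn
    rw [BPTree.mtildeAux_succ_of_children_ne_empty _ hc, hmsg]
    refine congrArg _ (Finset.sum_congr rfl fun c hc => congrArg _ ?_)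
    obtain ⟨hcB, hcu, rfl⟩ := mem_children_ballTree.1 hc
    have hdc := (shortestNbr_spec_of_reachable hcB.1 hcu).2
    have hcT : (graphAt E σ n).dist u c ≤ (ballTree E σ R u).depth :=
      Finset.le_sup (f := (ballTree E σ R u).dep) (mem_ballFinset.2 hcB)
    rw [ih hcB hcu (by omega), show (graphAt E σ n).dist u c - 1 =
      (graphAt E σ n).dist u (shortestNbr E σ n u c) - 1 + 1 by omega]
    rfl

lemma delaySchedule_mem_Icc {v : Fin n} (hv : v ∈ (graphAt E σ n).distBall u R) :
    delaySchedule (shortestNbr E σ n u) S n ((graphAt E σ n).dist u v - 1) v ∈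
      Finset.Icc 1 n := by
  by_cases hvu : v = u
  · simpa [hvu, delaySchedule] using Nat.one_le_of_lt u.isLt
  · obtain ⟨h₁, h₂⟩ := lastArrival_le_delaySchedule hS _ hv
      (Nat.succ_pred_eq_of_pos (hv.1.pos_dist_of_ne (Ne.symm hvu))).symm
    exact Finset.mem_Icc.2 ⟨(one_le_lastArrival v).trans h₁, h₂⟩

lemma mtildeAux_ballTree_of_mem_children_root {c : Fin n}
    (hc : c ∈ (ballTree E σ R u).children u) :
    MtildeAux (ballTree E σ R u) a b α τ' (fun z => msgTraj a b α R E σ τ'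
        (delaySchedule (shortestNbr E σ n u) S n ((graphAt E σ n).dist u z - 1) z) z
        (shortestNbr E σ n u z)) (ballTree E σ R u).verts.card c =
      msgTraj a b α R E σ τ' n c u := by
  obtain ⟨hcB, hcu, hcp⟩ := mem_children_ballTree.1 hc
  have hdc := (shortestNbr_spec_of_reachable hcB.1 hcu).2
  rw [hcp, dist_self] at hdc
  rw [mtildeAux_ballTree hS _ hcB hcu
    (by have := (ballTree E σ R u).depth_lt_card; omega), ← hdc, hcp]
  rfl

end Delays

end StreamingBP

open scoped Classical in
theorem streamBP_eq_bprop_on_ball_general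
    (n : ℕ) (a b α : ℝ)
    (R : ℕ) (hR : 0 < R)
    (E : EdgeIdx n → Bool) (σ : Equiv.Perm (Fin n)) (τ' : Fin n → Fin 2) (u : Fin n)
    (htree : ((graphAt E σ n).induce (ballSet E σ n R u)).IsAcyclic) :
    ∃ T : BPTree n,
      T.verts = ballFinset E σ n R u ∧
      T.root = u ∧
      (∀ v ∈ T.verts, v ≠ u →
        (graphAt E σ n).Adj (T.parent v) v ∧ T.dep v = (graphAt E σ n).dist u v) ∧
      ∃ tf : Fin n → ℕ,
        (∀ v : Fin n, T.isLeaf v → tf v ∈ Finset.Icc 1 n) ∧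
        streamBPBelief a b α R E σ τ' u =
          Bprop T a b α τ'
            (fun v => msgTraj a b α R E σ τ' (tf v) v (T.parent v)) := by
  choose! S hS using fun v (hv : v ∈ (graphAt E σ n).distBall u R) hvu hvR t
      (hLt : lastArrival σ (ballTree E σ R u) v ≤ t) htn =>
    exists_msgTraj_parent_eq (a := a) (b := b) (α := α) (τ' := τ') htree hv hvu hvR hLt htn
  refine ⟨ballTree E σ R u, rfl, rfl, fun v hv hvu =>
    ⟨(shortestNbr_spec_of_reachable (mem_ballFinset.1 hv).1 hvu).1.symm, rfl⟩,
    fun v => delaySchedule (shortestNbr E σ n u) S n ((graphAt E σ n).dist u v - 1) v,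
    fun v hv => delaySchedule_mem_Icc hS (mem_ballFinset.1 hv.1), ?_⟩
  rw [streamBPBelief, Bprop, filter_adj_root_eq_children_ballTree htree hR]
  exact congrArg _ (Finset.sum_congr rfl fun c hc =>
    congrArg _ (mtildeAux_ballTree_of_mem_children_root hS hc).symm)

open scoped Classical in
/-- **Streaming BP output as tree BP with delayed inputs (Lemma 9).**
Run the `R`-local streaming BP algorithm (log-likelihood-ratio form, `k = 2`) on a
realization of `StSSBM(n,2,a,b,α)`, and write `M^t = msgTraj … t` for the message state
before vertex `v(t+1)` arrives.  If the ball `B_R^n(u)` is a tree, then — viewing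
`B_R^n(u)` as a tree rooted at `u` (with the parent of each `v ≠ u` being its neighbor
closer to `u`) — there exist random time indices `t(v) ∈ [n]` for the leaves such that
`M_u = Bprop(u; B_R^n(u), {M_v^input = M^{t(v)}_{v→pa(v)} : v ∈ L_{B_R^n(u)}}, τ̃, α, a, b)`. -/
theorem streamBP_eq_bprop_on_ball
    (n : ℕ) (a b α : ℝ) (ha : 0 < a) (hb : 0 < b) (hα0 : 0 < α) (hα1 : α < 1 / 2)
    (R : ℕ) (hR : 0 < R)
    (E : EdgeIdx n → Bool) (σ : Equiv.Perm (Fin n)) (τ' : Fin n → Fin 2) (u : Fin n)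
    (htree : ((graphAt E σ n).induce (ballSet E σ n R u)).IsAcyclic) :
    ∃ T : BPTree n,
      T.verts = ballFinset E σ n R u ∧
      T.root = u ∧
      (∀ v ∈ T.verts, v ≠ u →
        (graphAt E σ n).Adj (T.parent v) v ∧ T.dep v = (graphAt E σ n).dist u v) ∧
      ∃ tf : Fin n → ℕ,
        (∀ v : Fin n, T.isLeaf v → tf v ∈ Finset.Icc 1 n) ∧
        streamBPBelief a b α R E σ τ' u =
          Bprop T a b α τ'
            (fun v => msgTraj a b α R E σ τ' (tf v) v (T.parent v)) :=
  streamBP_eq_bprop_on_ball_general n a b α R hR E σ τ' u htree
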